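/- arXiv:2307.02319 — 4 statements merged into one kernel-verified Lean document; each statement's English description precedes it below -/
import Mathlib

section
/- (Proposition 3.) Suppose r ≠ 0 and the payoffs A₁, A₀, B₁, B₀ are not all equal. Then every maximizer δ* = (δ₁*, δ₀*) of EU_D(· | r) over [0,1]² satisfies δ₁* ∈ {0, 1} or δ₀* ∈ {0, 1} (or both); that is, the optimal classifier is never interior in both coordinates. -/
open MeasureTheory

/-- A cost distribution: a CDF `F` with continuously differentiable structure
given by a strictly positive, differentiable, log-concave density `f` with full
support on `ℝ`. -/
structure CostDist where
  F : ℝ → ℝ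
  f : ℝ → ℝ
  deriv_eq : ∀ x : ℝ, HasDerivAt F (f x) x
  f_pos : ∀ x : ℝ, 0 < f x
  f_diff : Differentiable ℝ f
  f_logConcave : ConcaveOn ℝ Set.univ fun x => Real.log (f x)
  tendsto_bot : Filter.Tendsto F Filter.atBot (nhds 0)
  tendsto_top : Filter.Tendsto F Filter.atTop (nhds 1)

/-- Expected responsiveness of the classifier `δ = (δ₁, δ₀)` at precision `φ`. -/
noncomputable def rho (d1 d0 phi : ℝ) : ℝ := (d1 + d0 - 1) * (2 * phi - 1)

/-- The designer's expected payoff `EU_D(δ | r)`. -/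
noncomputable def EUD (D : CostDist) (phi A1 A0 B1 B0 r d1 d0 : ℝ) : ℝ :=
  D.F (r * rho d1 d0 phi) *
      (phi * (A1 * d1 + A0 * (1 - d1)) + (1 - phi) * (A0 * d0 + A1 * (1 - d0))) +
    (1 - D.F (r * rho d1 d0 phi)) *
      (phi * (B1 * d0 + B0 * (1 - d0)) + (1 - phi) * (B0 * d1 + B1 * (1 - d1)))

/-- A voter's expected payoff conditional on complying, `EU₁(r | γ)`. -/
noncomputable def EU1 (D : CostDist) (phi t gamma d1 d0 r : ℝ) : ℝ :=
  -gamma + r * rho d1 d0 phi * (1 - D.F (r * rho d1 d0 phi)) + t * D.F (r * rho d1 d0 phi)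

/-- A voter's expected payoff conditional on not complying, `EU₀(r)`. -/
noncomputable def EU0 (D : CostDist) (phi t d1 d0 r : ℝ) : ℝ :=
  -(r * rho d1 d0 phi) * D.F (r * rho d1 d0 phi) + t * D.F (r * rho d1 d0 phi)

/-- A voter's overall payoff `V(r | γ) = max(EU₁(r | γ), EU₀(r))`. -/
noncomputable def V (D : CostDist) (phi t gamma d1 d0 r : ℝ) : ℝ :=
  max (EU1 D phi t gamma d1 d0 r) (EU0 D phi t d1 d0 r)

/-- Strict quasiconcavity of a real function on a set. -/
def StrictQuasiconcaveOn (s : Set ℝ) (g : ℝ → ℝ) : Prop :=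
  ∀ ⦃x⦄, x ∈ s → ∀ ⦃y⦄, y ∈ s → x ≠ y → ∀ ⦃a b : ℝ⦄, 0 < a → 0 < b → a + b = 1 →
    min (g x) (g y) < g (a * x + b * y)

/-- Strict quasiconvexity of a real function on a set. -/
def StrictQuasiconvexOn (s : Set ℝ) (g : ℝ → ℝ) : Prop :=
  ∀ ⦃x⦄, x ∈ s → ∀ ⦃y⦄, y ∈ s → x ≠ y → ∀ ⦃a b : ℝ⦄, 0 < a → 0 < b → a + b = 1 →
    g (a * x + b * y) < max (g x) (g y)

/-- `(r, δ)` is an equilibrium: `r` maximizes the median voter's payoff given `δ`,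
and `δ ∈ [0,1]²` maximizes the designer's payoff given `r`. -/
def IsEquilibrium (D : CostDist) (phi t A1 A0 B1 B0 gammaMu r d1 d0 : ℝ) : Prop :=
  d1 ∈ Set.Icc (0 : ℝ) 1 ∧ d0 ∈ Set.Icc (0 : ℝ) 1 ∧
  (∀ r' : ℝ, V D phi t gammaMu d1 d0 r' ≤ V D phi t gammaMu d1 d0 r) ∧
  (∀ e1 ∈ Set.Icc (0 : ℝ) 1, ∀ e0 ∈ Set.Icc (0 : ℝ) 1,
    EUD D phi A1 A0 B1 B0 r e1 e0 ≤ EUD D phi A1 A0 B1 B0 r d1 d0)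

/-! Along the antidiagonal direction `(1, -1)` the responsiveness `ρ`, hence the prevalence
`π = F (r ρ)`, is constant, so `EU_D` is affine there. At an interior maximizer its slope
`π (A₁ - A₀) - (1 - π) (B₁ - B₀)` must vanish, and then a whole antidiagonal segment consists of
maximizers. The first-order conditions in `δ₁` at two points of that segment differ by
`r (2φ - 1) f(r ρ) t ((A₁ - A₀) + (B₁ - B₀))`, whose first factors are nonzero; together with the
vanishing slope this gives `A₁ = A₀` and `B₁ = B₀`. Then `EU_D = B₁ + (A₁ - B₁) π`, and the
first-order condition in `δ₁` forces `A₁ = B₁`. -/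

open Filter Set Topology

theorem isLocalMax_comp_line {g : ℝ → ℝ → ℝ} {d1 d0 : ℝ} (hd1 : d1 ∈ Ioo (0 : ℝ) 1)
    (hd0 : d0 ∈ Ioo (0 : ℝ) 1) (hmax : ∀ e1 ∈ Icc (0 : ℝ) 1, ∀ e0 ∈ Icc (0 : ℝ) 1, g e1 e0 ≤ g d1 d0)
    (v1 v0 : ℝ) : IsLocalMax (fun t => g (d1 + t * v1) (d0 + t * v0)) 0 := by
  have hline : ∀ d v : ℝ, Tendsto (fun t : ℝ => d + t * v) (𝓝 0) (𝓝 d) := fun d v => by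
    simpa using ((continuous_id.mul continuous_const).const_add d).tendsto' (0 : ℝ) (d + 0 * v) rfl
  filter_upwards [(hline d1 v1).eventually (Icc_mem_nhds hd1.1 hd1.2),
    (hline d0 v0).eventually (Icc_mem_nhds hd0.1 hd0.2)] with t ht1 ht0
  simpa only [zero_mul, add_zero] using hmax _ ht1 _ ht0

theorem hasDerivAt_add_mul (a b : ℝ) : HasDerivAt (fun t : ℝ => a + t * b) b 0 := by
  simpa using ((hasDerivAt_id (0 : ℝ)).mul_const b).const_add a

noncomputable def payoffA (phi A1 A0 d1 d0 : ℝ) : ℝ :=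
  phi * (A1 * d1 + A0 * (1 - d1)) + (1 - phi) * (A0 * d0 + A1 * (1 - d0))

noncomputable def payoffB (phi B1 B0 d1 d0 : ℝ) : ℝ :=
  phi * (B1 * d0 + B0 * (1 - d0)) + (1 - phi) * (B0 * d1 + B1 * (1 - d1))

theorem EUD_eq (D : CostDist) (phi A1 A0 B1 B0 r d1 d0 : ℝ) :
    EUD D phi A1 A0 B1 B0 r d1 d0 = D.F (r * rho d1 d0 phi) * payoffA phi A1 A0 d1 d0
      + (1 - D.F (r * rho d1 d0 phi)) * payoffB phi B1 B0 d1 d0 := rfl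

noncomputable def dirDerivEUD (D : CostDist) (phi A1 A0 B1 B0 r d1 d0 v1 v0 : ℝ) : ℝ :=
  D.f (r * rho d1 d0 phi) * (r * (2 * phi - 1) * (v1 + v0)) *
      (payoffA phi A1 A0 d1 d0 - payoffB phi B1 B0 d1 d0)
    + D.F (r * rho d1 d0 phi) * ((A1 - A0) * (phi * v1 - (1 - phi) * v0))
    + (1 - D.F (r * rho d1 d0 phi)) * ((B1 - B0) * (phi * v0 - (1 - phi) * v1))

theorem hasDerivAt_EUD_line (D : CostDist) (phi A1 A0 B1 B0 r d1 d0 v1 v0 : ℝ) :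
    HasDerivAt (fun t => EUD D phi A1 A0 B1 B0 r (d1 + t * v1) (d0 + t * v0))
      (dirDerivEUD D phi A1 A0 B1 B0 r d1 d0 v1 v0) 0 := by
  have hS : HasDerivAt (fun t => r * rho (d1 + t * v1) (d0 + t * v0) phi)
      (r * (2 * phi - 1) * (v1 + v0)) 0 := by
    convert hasDerivAt_add_mul (r * rho d1 d0 phi) (r * (2 * phi - 1) * (v1 + v0)) using 1
    funext t; simp only [rho]; ring
  have hA : HasDerivAt (fun t => payoffA phi A1 A0 (d1 + t * v1) (d0 + t * v0))
      ((A1 - A0) * (phi * v1 - (1 - phi) * v0)) 0 := by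
    convert hasDerivAt_add_mul (payoffA phi A1 A0 d1 d0) _ using 1
    funext t; simp only [payoffA]; ring
  have hB : HasDerivAt (fun t => payoffB phi B1 B0 (d1 + t * v1) (d0 + t * v0))
      ((B1 - B0) * (phi * v0 - (1 - phi) * v1)) 0 := by
    convert hasDerivAt_add_mul (payoffB phi B1 B0 d1 d0) _ using 1
    funext t; simp only [payoffB]; ring
  have hF := (D.deriv_eq (r * rho d1 d0 phi)).comp_of_eq 0 hS (by simp only [zero_mul, add_zero])
  simp only [EUD_eq]
  refine ((hF.mul hA).add ((hF.const_sub 1).mul hB)).congr_deriv ?_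
  simp only [dirDerivEUD, Function.comp_apply, zero_mul, add_zero]
  ring

theorem dirDerivEUD_eq_zero_of_isMax {D : CostDist} {phi A1 A0 B1 B0 r d1 d0 : ℝ}
    (hd1 : d1 ∈ Ioo (0 : ℝ) 1) (hd0 : d0 ∈ Ioo (0 : ℝ) 1)
    (hmax : ∀ e1 ∈ Icc (0 : ℝ) 1, ∀ e0 ∈ Icc (0 : ℝ) 1,
      EUD D phi A1 A0 B1 B0 r e1 e0 ≤ EUD D phi A1 A0 B1 B0 r d1 d0) (v1 v0 : ℝ) :
    dirDerivEUD D phi A1 A0 B1 B0 r d1 d0 v1 v0 = 0 :=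
  (isLocalMax_comp_line hd1 hd0 hmax v1 v0).hasDerivAt_eq_zero (hasDerivAt_EUD_line ..)

theorem rho_add_sub (d1 d0 t phi : ℝ) : rho (d1 + t) (d0 - t) phi = rho d1 d0 phi := by
  simp only [rho]; ring

theorem EUD_add_sub (D : CostDist) (phi A1 A0 B1 B0 r d1 d0 t : ℝ) :
    EUD D phi A1 A0 B1 B0 r (d1 + t) (d0 - t) = EUD D phi A1 A0 B1 B0 r d1 d0
      + t * (D.F (r * rho d1 d0 phi) * (A1 - A0) - (1 - D.F (r * rho d1 d0 phi)) * (B1 - B0)) := by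
  simp only [EUD_eq, rho_add_sub, payoffA, payoffB]; ring

theorem dirDerivEUD_one_neg_one (D : CostDist) (phi A1 A0 B1 B0 r d1 d0 : ℝ) :
    dirDerivEUD D phi A1 A0 B1 B0 r d1 d0 1 (-1) =
      D.F (r * rho d1 d0 phi) * (A1 - A0) - (1 - D.F (r * rho d1 d0 phi)) * (B1 - B0) := by
  simp only [dirDerivEUD]; ring

theorem dirDerivEUD_add_sub (D : CostDist) (phi A1 A0 B1 B0 r d1 d0 t : ℝ) :
    dirDerivEUD D phi A1 A0 B1 B0 r (d1 + t) (d0 - t) 1 0 =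
      dirDerivEUD D phi A1 A0 B1 B0 r d1 d0 1 0
        + D.f (r * rho d1 d0 phi) * (r * (2 * phi - 1)) * (t * ((A1 - A0) + (B1 - B0))) := by
  simp only [dirDerivEUD, rho_add_sub, payoffA, payoffB]; ring

theorem prop3_general (D : CostDist) (phi : ℝ) (hphi : phi ∈ Set.Ioc (1 / 2 : ℝ) 1)
    (A1 A0 B1 B0 r : ℝ) (hr : r ≠ 0) (hne : ¬(A1 = A0 ∧ A0 = B1 ∧ B1 = B0)) :
    ∀ d1 ∈ Set.Icc (0 : ℝ) 1, ∀ d0 ∈ Set.Icc (0 : ℝ) 1,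
      (∀ e1 ∈ Set.Icc (0 : ℝ) 1, ∀ e0 ∈ Set.Icc (0 : ℝ) 1,
        EUD D phi A1 A0 B1 B0 r e1 e0 ≤ EUD D phi A1 A0 B1 B0 r d1 d0) →
      (d1 = 0 ∨ d1 = 1) ∨ (d0 = 0 ∨ d0 = 1) := by
  intro d1 hd1 d0 hd0 hmax
  by_contra hcorner
  simp only [not_or] at hcorner
  obtain ⟨⟨h10, h11⟩, h00, h01⟩ := hcorner
  have hd1' : d1 ∈ Ioo (0 : ℝ) 1 := ⟨hd1.1.lt_of_ne' h10, hd1.2.lt_of_ne h11⟩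
  have hd0' : d0 ∈ Ioo (0 : ℝ) 1 := ⟨hd0.1.lt_of_ne' h00, hd0.2.lt_of_ne h01⟩
  have hfx : D.f (r * rho d1 d0 phi) * (r * (2 * phi - 1)) ≠ 0 :=
    mul_ne_zero (D.f_pos _).ne' (mul_ne_zero hr (by linarith [hphi.1]))
  have hanti := dirDerivEUD_eq_zero_of_isMax hd1' hd0' hmax 1 (-1)
  rw [dirDerivEUD_one_neg_one] at hanti
  obtain ⟨t, ht, hd1t, hd0t⟩ : ∃ t > 0, d1 + t ∈ Ioo (0 : ℝ) 1 ∧ d0 - t ∈ Ioo (0 : ℝ) 1 := by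
    refine ⟨min (1 - d1) d0 / 2, ?_, ⟨?_, ?_⟩, ⟨?_, ?_⟩⟩ <;>
      linarith [min_le_left (1 - d1) d0, min_le_right (1 - d1) d0, lt_min (sub_pos.2 hd1'.2) hd0'.1,
        hd1'.1, hd0'.2]
  have hmax_t : ∀ e1 ∈ Icc (0 : ℝ) 1, ∀ e0 ∈ Icc (0 : ℝ) 1,
      EUD D phi A1 A0 B1 B0 r e1 e0 ≤ EUD D phi A1 A0 B1 B0 r (d1 + t) (d0 - t) := by
    rwa [EUD_add_sub, hanti, mul_zero, add_zero]
  have hfst := dirDerivEUD_eq_zero_of_isMax hd1' hd0' hmax 1 0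
  have hfst_t := dirDerivEUD_eq_zero_of_isMax hd1t hd0t hmax_t 1 0
  rw [dirDerivEUD_add_sub, hfst, zero_add] at hfst_t
  have hsum : (A1 - A0) + (B1 - B0) = 0 := by simpa [hfx, ht.ne'] using hfst_t
  have hA : A1 = A0 := by linear_combination hanti + (1 - D.F (r * rho d1 d0 phi)) * hsum
  have hB : B1 = B0 := by linear_combination hsum - hA
  subst hA hB
  have hAB : D.f (r * rho d1 d0 phi) * (r * (2 * phi - 1)) * (A1 - B1) = 0 := by
    simp only [dirDerivEUD, payoffA, payoffB] at hfst
    linear_combination hfst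
  exact hne ⟨rfl, by simpa [hfx, sub_eq_zero] using hAB, rfl⟩

/-- **Proposition 3.** If `r ≠ 0` and the payoffs are not all equal, then any maximizer
of `EU_D(· | r)` over `[0,1]²` has at least one coordinate at a corner. -/
theorem prop3 (D : CostDist) (phi : ℝ) (hphi : phi ∈ Set.Ioc (1 / 2 : ℝ) 1)
    (A1 A0 B1 B0 r : ℝ) (hA1 : 0 ≤ A1) (hA0 : 0 ≤ A0) (hB1 : 0 ≤ B1) (hB0 : 0 ≤ B0)
    (hr : r ≠ 0) (hne : ¬(A1 = A0 ∧ A0 = B1 ∧ B1 = B0)) :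
    ∀ d1 ∈ Set.Icc (0 : ℝ) 1, ∀ d0 ∈ Set.Icc (0 : ℝ) 1,
      (∀ e1 ∈ Set.Icc (0 : ℝ) 1, ∀ e0 ∈ Set.Icc (0 : ℝ) 1,
        EUD D phi A1 A0 B1 B0 r e1 e0 ≤ EUD D phi A1 A0 B1 B0 r d1 d0) →
      (d1 = 0 ∨ d1 = 1) ∨ (d0 = 0 ∨ d0 = 1) :=
  prop3_general D phi hphi A1 A0 B1 B0 r hr hne
end

section
/- (Corollary 1, compliance branch.) There exists a unique k₁ ∈ ℝ satisfying the fixed-point equation k₁ = t + (1 − F(k₁))/f(k₁). Moreover, for any classifier δ with ρ(δ,φ) ≠ 0 and any voter cost γ, the map r ↦ EU₁(r | γ) attains its unique global maximum over ℝ at r₁* = k₁ / ρ(δ,φ). -/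
open MeasureTheory

/-!
Log-concavity of `f` makes the Mills ratio `(1 - F x) / f x` antitone (compare the integrals
`∫_{u > y} f x f u` and `∫_{u > y} f y f (u - (y - x))` pointwise), so `x ↦ t + (1 - F x) / f x - x`
is continuous and strictly decreasing from positive to negative values: it has exactly one zero
`k₁`. The payoff `EU₁(r | γ)` depends on `r` only through `x = r ρ`, as `-γ + x (1 - F x) + t F x`,
whose derivative is `f x` times that decreasing function, so it strictly increases up to `x = k₁`
and strictly decreases afterwards.
-/

open Set Filter

theorem ConcaveOn.add_le_add_of_le_of_le {S : Set ℝ} {φ : ℝ → ℝ} (hφ : ConcaveOn ℝ S φ)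
    {x y z : ℝ} (hx : x ∈ S) (hz : z ∈ S) (hxy : x ≤ y) (hyz : y ≤ z) :
    φ x + φ z ≤ φ y + φ (x + z - y) := by
  rcases hxy.eq_or_lt with rfl | hxy
  · simp
  have hzx : 0 < z - x := by linarith
  set θ := (z - y) / (z - x)
  have hθ0 : 0 ≤ θ := div_nonneg (by linarith) hzx.le
  have hθ1 : 0 ≤ 1 - θ := by
    have : θ ≤ 1 := (div_le_one hzx).2 (by linarith)
    linarith
  have hy : θ • x + (1 - θ) • z = y := by
    simp only [θ, smul_eq_mul]; field_simp; ring
  have hy' : (1 - θ) • x + θ • z = x + z - y := by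
    simp only [θ, smul_eq_mul]; field_simp; ring
  have h₁ := hφ.2 hx hz hθ0 hθ1 (by ring)
  have h₂ := hφ.2 hx hz hθ1 hθ0 (by ring)
  rw [hy] at h₁
  rw [hy'] at h₂
  simp only [smul_eq_mul] at h₁ h₂
  linarith

theorem lt_of_hasDerivAt_pos_of_neg {g g' : ℝ → ℝ} {k x : ℝ} (hg : ∀ y, HasDerivAt g (g' y) y)
    (hpos : ∀ y < k, 0 < g' y) (hneg : ∀ y, k < y → g' y < 0) (hx : x ≠ k) : g x < g k := by
  have hcont : ContinuousOn g univ := fun y _ => (hg y).continuousAt.continuousWithinAt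
  rcases hx.lt_or_gt with hxk | hkx
  · have hmono : StrictMonoOn g (Iic k) :=
      strictMonoOn_of_hasDerivWithinAt_pos (convex_Iic k) (hcont.mono (subset_univ _))
        (fun y _ => (hg y).hasDerivWithinAt) fun y hy => hpos y (by simpa using hy)
    exact hmono hxk.le self_mem_Iic hxk
  · have hanti : StrictAntiOn g (Ici k) :=
      strictAntiOn_of_hasDerivWithinAt_neg (convex_Ici k) (hcont.mono (subset_univ _))
        (fun y _ => (hg y).hasDerivWithinAt) fun y hy => hneg y (by simpa using hy)
    exact hanti self_mem_Ici hkx.le hkx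

namespace CostDist

variable (D : CostDist)

theorem continuous_F : Continuous D.F :=
  continuous_iff_continuousAt.2 fun x => (D.deriv_eq x).continuousAt

theorem hasDerivAt_F_sub (d u : ℝ) : HasDerivAt (fun v => D.F (v - d)) (D.f (u - d)) u :=
  (D.deriv_eq (u - d)).comp_sub_const u d

theorem tendsto_F_sub_atTop (d : ℝ) : Tendsto (fun u => D.F (u - d)) atTop (nhds 1) :=
  D.tendsto_top.comp (tendsto_atTop_add_const_right atTop (-d) tendsto_id)

theorem integral_Ioi_f_sub (y d : ℝ) : ∫ u in Ioi y, D.f (u - d) = 1 - D.F (y - d) :=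
  integral_Ioi_of_hasDerivAt_of_nonneg' (fun u _ => D.hasDerivAt_F_sub d u)
    (fun _ _ => (D.f_pos _).le) (D.tendsto_F_sub_atTop d)

theorem integrableOn_Ioi_f_sub (y d : ℝ) : IntegrableOn (fun u => D.f (u - d)) (Ioi y) :=
  integrableOn_Ioi_deriv_of_nonneg' (fun u _ => D.hasDerivAt_F_sub d u)
    (fun _ _ => (D.f_pos _).le) (D.tendsto_F_sub_atTop d)

theorem integral_Ioi_f (y : ℝ) : ∫ u in Ioi y, D.f u = 1 - D.F y := by
  simpa using D.integral_Ioi_f_sub y 0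

theorem integrableOn_Ioi_f (y : ℝ) : IntegrableOn D.f (Ioi y) := by
  simpa using D.integrableOn_Ioi_f_sub y 0

theorem one_sub_F_nonneg (x : ℝ) : 0 ≤ 1 - D.F x := by
  rw [← D.integral_Ioi_f x]
  exact setIntegral_nonneg measurableSet_Ioi fun u _ => (D.f_pos u).le

theorem f_mul_f_le {x y s : ℝ} (hxy : x ≤ y) (hys : y ≤ s) :
    D.f x * D.f s ≤ D.f y * D.f (x + s - y) := by
  have h := Real.exp_le_exp.2 (D.f_logConcave.add_le_add_of_le_of_le (mem_univ x) (mem_univ s) hxy hys)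
  simpa only [Real.exp_add, Real.exp_log (D.f_pos _)] using h

theorem f_mul_one_sub_F_le {x y : ℝ} (hxy : x ≤ y) :
    D.f x * (1 - D.F y) ≤ D.f y * (1 - D.F x) := by
  have hl : D.f x * (1 - D.F y) = ∫ u in Ioi y, D.f x * D.f u := by
    rw [integral_const_mul, D.integral_Ioi_f]
  have hr : D.f y * (1 - D.F x) = ∫ u in Ioi y, D.f y * D.f (u - (y - x)) := by
    rw [integral_const_mul, D.integral_Ioi_f_sub, sub_sub_cancel]
  rw [hl, hr]
  refine setIntegral_mono_on ((D.integrableOn_Ioi_f y).const_mul _)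
    ((D.integrableOn_Ioi_f_sub y (y - x)).const_mul _) measurableSet_Ioi fun s hs => ?_
  have h := D.f_mul_f_le hxy (le_of_lt hs)
  rwa [show x + s - y = s - (y - x) by ring] at h

noncomputable def millsRatio (x : ℝ) : ℝ := (1 - D.F x) / D.f x

theorem millsRatio_nonneg (x : ℝ) : 0 ≤ D.millsRatio x :=
  div_nonneg (D.one_sub_F_nonneg x) (D.f_pos x).le

theorem millsRatio_antitone : Antitone D.millsRatio := fun x y hxy => by
  rw [millsRatio, millsRatio, div_le_div_iff₀ (D.f_pos y) (D.f_pos x)]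
  linarith [D.f_mul_one_sub_F_le hxy]

theorem continuous_millsRatio : Continuous D.millsRatio :=
  (continuous_const.sub D.continuous_F).div D.f_diff.continuous fun x => (D.f_pos x).ne'

theorem strictAnti_millsRatio_sub (t : ℝ) : StrictAnti fun x => t + D.millsRatio x - x :=
  fun x y hxy => by linarith [D.millsRatio_antitone hxy.le]

theorem existsUnique_eq_add_millsRatio (t : ℝ) : ∃! k : ℝ, k = t + D.millsRatio k := by
  have hanti := D.strictAnti_millsRatio_sub t
  suffices ∃ k, t + D.millsRatio k - k = 0 by
    obtain ⟨k, hk⟩ := this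
    exact ⟨k, by linarith, fun y hy => hanti.injective (by linarith)⟩
  have hleft : 0 < t + D.millsRatio (t - 1) - (t - 1) := by
    linarith [D.millsRatio_nonneg (t - 1)]
  set b := t + D.millsRatio t + 1
  have htb : t ≤ b := by linarith [D.millsRatio_nonneg t]
  have hright : t + D.millsRatio b - b < 0 := by linarith [D.millsRatio_antitone htb]
  have hcont : Continuous fun x => t + D.millsRatio x - x :=
    (continuous_const.add D.continuous_millsRatio).sub continuous_id
  obtain ⟨k, -, hk⟩ := intermediate_value_Icc' (by linarith : t - 1 ≤ b) hcont.continuousOn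
    (show (0 : ℝ) ∈ Icc _ _ from ⟨hright.le, hleft.le⟩)
  exact ⟨k, hk⟩

noncomputable def compliancePayoff (t x : ℝ) : ℝ := x * (1 - D.F x) + t * D.F x

theorem hasDerivAt_compliancePayoff (t x : ℝ) :
    HasDerivAt (D.compliancePayoff t) (D.f x * (t + D.millsRatio x - x)) x := by
  have h : HasDerivAt (fun x => x * (1 - D.F x) + t * D.F x)
      (1 * (1 - D.F x) + x * (0 - D.f x) + t * D.f x) x :=
    ((hasDerivAt_id x).mul ((hasDerivAt_const x 1).sub (D.deriv_eq x))).add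
      ((D.deriv_eq x).const_mul t)
  refine h.congr_deriv ?_
  unfold millsRatio
  field_simp [(D.f_pos x).ne']
  ring

theorem compliancePayoff_lt {t k x : ℝ} (hk : k = t + D.millsRatio k) (hx : x ≠ k) :
    D.compliancePayoff t x < D.compliancePayoff t k := by
  have hanti := D.strictAnti_millsRatio_sub t
  refine lt_of_hasDerivAt_pos_of_neg (D.hasDerivAt_compliancePayoff t)
    (fun y hy => mul_pos (D.f_pos y) ?_) (fun y hy => mul_neg_of_pos_of_neg (D.f_pos y) ?_) hx
  all_goals linarith [hanti hy]

theorem EU1_eq_compliancePayoff (phi t gamma d1 d0 r : ℝ) :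
    EU1 D phi t gamma d1 d0 r = -gamma + D.compliancePayoff t (r * rho d1 d0 phi) := by
  rw [EU1, compliancePayoff]
  ring

end CostDist

theorem cor1_compliance_general (D : CostDist) (phi t : ℝ) :
    (∃! k : ℝ, k = t + (1 - D.F k) / D.f k) ∧
    (∀ k1 : ℝ, k1 = t + (1 - D.F k1) / D.f k1 →
      ∀ d1 ∈ Set.Icc (0 : ℝ) 1, ∀ d0 ∈ Set.Icc (0 : ℝ) 1, rho d1 d0 phi ≠ 0 →
        ∀ gamma r : ℝ, r ≠ k1 / rho d1 d0 phi →
          EU1 D phi t gamma d1 d0 r < EU1 D phi t gamma d1 d0 (k1 / rho d1 d0 phi)) := by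
  refine ⟨D.existsUnique_eq_add_millsRatio t, fun k1 hk1 d1 _ d0 _ hρ gamma r hr => ?_⟩
  have hx : r * rho d1 d0 phi ≠ k1 := fun h => hr ((eq_div_iff hρ).2 h)
  rw [D.EU1_eq_compliancePayoff, D.EU1_eq_compliancePayoff, div_mul_cancel₀ _ hρ]
  linarith [D.compliancePayoff_lt hk1 hx]

/-- **Corollary 1 (compliance branch).** There is a unique `k₁` with
`k₁ = t + (1 − F(k₁))/f(k₁)`, and for any non-null classifier and any cost `γ`,
`EU₁(· | γ)` attains its unique global maximum at `r₁* = k₁ / ρ(δ,φ)`. -/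
theorem cor1_compliance (D : CostDist) (phi t : ℝ)
    (hphi : phi ∈ Set.Ioc (1 / 2 : ℝ) 1) (ht : 0 ≤ t) :
    (∃! k : ℝ, k = t + (1 - D.F k) / D.f k) ∧
    (∀ k1 : ℝ, k1 = t + (1 - D.F k1) / D.f k1 →
      ∀ d1 ∈ Set.Icc (0 : ℝ) 1, ∀ d0 ∈ Set.Icc (0 : ℝ) 1, rho d1 d0 phi ≠ 0 →
        ∀ gamma r : ℝ, r ≠ k1 / rho d1 d0 phi →
          EU1 D phi t gamma d1 d0 r < EU1 D phi t gamma d1 d0 (k1 / rho d1 d0 phi)) :=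
  cor1_compliance_general D phi t
end

section
/- (Corollary 1, non-compliance branch.) There exists a unique k₀ ∈ ℝ satisfying the fixed-point equation k₀ = t − F(k₀)/f(k₀). Moreover, for any classifier δ with ρ(δ,φ) ≠ 0, the map r ↦ EU₀(r) attains its unique global maximum over ℝ at r₀* = k₀ / ρ(δ,φ). -/
/-!
Log-concavity of `f` makes `f'/f` antitone, and comparing `f - c F` with `c = f'(x)/f(x)` on
`(-∞, x]` gives `F f' ≤ f²`, i.e. `F/f` is nondecreasing. Hence `k ↦ k + F k / f k` is a strictly
increasing continuous bijection and `k + F k / f k = t` has exactly one solution `k₀`.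
Writing `x = r ρ`, `EU₀(r) = (t - x) F(x)`, whose derivative `f(x) (t - (x + F x / f x))` is
positive left of `k₀` and negative right of it, so `x = k₀`, i.e. `r = k₀ / ρ`, is the strict
global maximiser.
-/

open MeasureTheory

open Set Filter Topology

lemma lt_of_hasDerivAt_pos_left_neg_right {g g' : ℝ → ℝ} {a x : ℝ}
    (hg : ∀ y, HasDerivAt g (g' y) y) (hpos : ∀ y < a, 0 < g' y)
    (hneg : ∀ y, a < y → g' y < 0) (hx : x ≠ a) : g x < g a := by
  have hcont : Continuous g := continuous_iff_continuousAt.2 fun y => (hg y).continuousAt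
  rcases hx.lt_or_gt with hxa | hax
  · refine strictMonoOn_of_hasDerivWithinAt_pos (convex_Iic a) hcont.continuousOn
      (fun y _ => (hg y).hasDerivWithinAt) (fun y hy => hpos y ?_) hxa.le self_mem_Iic hxa
    rwa [interior_Iic] at hy
  · refine strictAntiOn_of_hasDerivWithinAt_neg (convex_Ici a) hcont.continuousOn
      (fun y _ => (hg y).hasDerivWithinAt) (fun y hy => hneg y ?_) self_mem_Ici hax.le hax
    rwa [interior_Ici] at hy

namespace CostDist

variable (D : CostDist)

lemma differentiable_F : Differentiable ℝ D.F := fun x => (D.deriv_eq x).differentiableAt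

lemma strictMono_F : StrictMono D.F := strictMono_of_hasDerivAt_pos D.deriv_eq D.f_pos

lemma F_nonneg (x : ℝ) : 0 ≤ D.F x :=
  le_of_tendsto D.tendsto_bot <|
    (eventually_le_atBot x).mono fun _ hax => D.strictMono_F.monotone hax

lemma antitone_deriv_f_div_f : Antitone fun x => deriv D.f x / D.f x := by
  have hlog : ∀ x, HasDerivAt (fun y => Real.log (D.f y)) (deriv D.f x / D.f x) x := fun x =>
    (D.f_diff x).hasDerivAt.log (D.f_pos x).ne'
  intro x y hxy
  have := D.f_logConcave.antitoneOn_deriv (fun z _ => (hlog z).differentiableAt)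
    (mem_univ x) (mem_univ y) hxy
  rwa [(hlog x).deriv, (hlog y).deriv] at this

/-- Since `f - c F` is monotone on `(-∞, x]` and `f > 0`, it stays above the limit `0` of `-c F`. -/
lemma mul_F_le_f {c x : ℝ} (hc : ∀ u ≤ x, c * D.f u ≤ deriv D.f u) : c * D.F x ≤ D.f x := by
  have hmono : MonotoneOn (fun u => D.f u - c * D.F u) (Iic x) := by
    refine monotoneOn_of_hasDerivWithinAt_nonneg (convex_Iic x)
      (D.f_diff.continuous.sub (continuous_const.mul D.differentiable_F.continuous)).continuousOn
      (fun u _ => ((D.f_diff u).hasDerivAt.sub ((D.deriv_eq u).const_mul c)).hasDerivWithinAt)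
      fun u hu => ?_
    rw [interior_Iic] at hu
    linarith [hc u hu.le]
  have hlim : Tendsto (fun a => -c * D.F a) atBot (𝓝 0) := by
    simpa using D.tendsto_bot.const_mul (-c)
  have : 0 ≤ D.f x - c * D.F x := by
    refine le_of_tendsto hlim ((eventually_le_atBot x).mono fun a hax => ?_)
    have := hmono hax self_mem_Iic hax
    linarith [D.f_pos a]
  linarith

lemma F_mul_deriv_f_le_sq (x : ℝ) : D.F x * deriv D.f x ≤ D.f x ^ 2 := by
  have hfx := D.f_pos x
  have hc : ∀ u ≤ x, deriv D.f x / D.f x * D.f u ≤ deriv D.f u := fun u hux =>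
    (le_div_iff₀ (D.f_pos u)).1 (D.antitone_deriv_f_div_f hux)
  have h := D.mul_F_le_f hc
  rw [div_mul_eq_mul_div, div_le_iff₀ hfx] at h
  linarith

lemma monotone_F_div_f : Monotone fun x => D.F x / D.f x := by
  refine monotone_of_hasDerivAt_nonneg
    (fun x => (D.deriv_eq x).div (D.f_diff x).hasDerivAt (D.f_pos x).ne') fun x => ?_
  have := D.F_mul_deriv_f_le_sq x
  exact div_nonneg (by nlinarith) (sq_nonneg _)

lemma strictMono_add_F_div_f : StrictMono fun x => x + D.F x / D.f x :=
  strictMono_id.add_monotone D.monotone_F_div_f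

lemma exists_add_F_div_f_eq (t : ℝ) : ∃ k, k + D.F k / D.f k = t := by
  set q := D.F t / D.f t
  have hq : 0 ≤ q := div_nonneg (D.F_nonneg t) (D.f_pos t).le
  have hcont : Continuous fun x => x + D.F x / D.f x :=
    continuous_id.add <| D.differentiable_F.continuous.div D.f_diff.continuous
      fun x => (D.f_pos x).ne'
  have hlow : t - q + D.F (t - q) / D.f (t - q) ≤ t := by
    linarith [D.monotone_F_div_f (by linarith : t - q ≤ t)]
  obtain ⟨k, -, hk⟩ := intermediate_value_Icc (by linarith : t - q ≤ t) hcont.continuousOn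
    ⟨hlow, by linarith⟩
  exact ⟨k, hk⟩

lemma hasDerivAt_sub_mul_F (t x : ℝ) :
    HasDerivAt (fun y => (t - y) * D.F y) (D.f x * (t - (x + D.F x / D.f x))) x := by
  refine (((hasDerivAt_id' x).const_sub t).fun_mul (D.deriv_eq x)).congr_deriv ?_
  field_simp [(D.f_pos x).ne']
  ring

lemma sub_mul_F_lt {t k x : ℝ} (hk : k + D.F k / D.f k = t) (hx : x ≠ k) :
    (t - x) * D.F x < (t - k) * D.F k := by
  refine lt_of_hasDerivAt_pos_left_neg_right (D.hasDerivAt_sub_mul_F t) (fun y hy => ?_)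
    (fun y hy => ?_) hx
  · exact mul_pos (D.f_pos y) (by linarith [D.strictMono_add_F_div_f hy])
  · exact mul_neg_of_pos_of_neg (D.f_pos y) (by linarith [D.strictMono_add_F_div_f hy])

end CostDist

lemma EU0_eq_sub_mul_F (D : CostDist) (phi t d1 d0 r : ℝ) :
    EU0 D phi t d1 d0 r = (t - r * rho d1 d0 phi) * D.F (r * rho d1 d0 phi) := by
  unfold EU0
  ring

theorem cor1_noncompliance_general (D : CostDist) (phi t : ℝ) :
    (∃! k : ℝ, k = t - D.F k / D.f k) ∧
    (∀ k0 : ℝ, k0 = t - D.F k0 / D.f k0 →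
      ∀ d1 ∈ Set.Icc (0 : ℝ) 1, ∀ d0 ∈ Set.Icc (0 : ℝ) 1, rho d1 d0 phi ≠ 0 →
        ∀ r : ℝ, r ≠ k0 / rho d1 d0 phi →
          EU0 D phi t d1 d0 r < EU0 D phi t d1 d0 (k0 / rho d1 d0 phi)) := by
  have fixedPoint_iff : ∀ k, k = t - D.F k / D.f k ↔ k + D.F k / D.f k = t := fun k =>
    ⟨fun h => by linarith, fun h => by linarith⟩
  obtain ⟨k, hk⟩ := D.exists_add_F_div_f_eq t
  refine ⟨⟨k, (fixedPoint_iff k).2 hk, fun y hy => ?_⟩, ?_⟩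
  · exact D.strictMono_add_F_div_f.injective (((fixedPoint_iff y).1 hy).trans hk.symm)
  · intro k0 hk0 d1 _ d0 _ hρ r hr
    rw [EU0_eq_sub_mul_F, EU0_eq_sub_mul_F, div_mul_cancel₀ _ hρ]
    exact D.sub_mul_F_lt ((fixedPoint_iff k0).1 hk0) fun h => hr (eq_div_of_mul_eq hρ h)

/-- **Corollary 1 (non-compliance branch).** There is a unique `k₀` with
`k₀ = t − F(k₀)/f(k₀)`, and for any non-null classifier `EU₀` attains its unique
global maximum at `r₀* = k₀ / ρ(δ,φ)`. -/
theorem cor1_noncompliance (D : CostDist) (phi t : ℝ)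
    (hphi : phi ∈ Set.Ioc (1 / 2 : ℝ) 1) (ht : 0 ≤ t) :
    (∃! k : ℝ, k = t - D.F k / D.f k) ∧
    (∀ k0 : ℝ, k0 = t - D.F k0 / D.f k0 →
      ∀ d1 ∈ Set.Icc (0 : ℝ) 1, ∀ d0 ∈ Set.Icc (0 : ℝ) 1, rho d1 d0 phi ≠ 0 →
        ∀ r : ℝ, r ≠ k0 / rho d1 d0 phi →
          EU0 D phi t d1 d0 r < EU0 D phi t d1 d0 (k0 / rho d1 d0 phi)) :=
  cor1_noncompliance_general D phi t
end

section
/- (Proposition 7, median voter theorem.) Fix a classifier δ with ρ(δ,φ) ≠ 0 and let r* = k_μ*(t)/ρ(δ,φ). Then for every alternative reward r ∈ ℝ, the set of costs {γ ∈ ℝ : V(r* | γ) ≥ V(r | γ)} has probability at least 1/2 under the distribution with CDF F; that is, r* is weakly preferred to any other reward by at least half of the population (a Condorcet winner). If instead ρ(δ,φ) = 0, then V(r | γ) is constant in r for every γ, so all voters are indifferent among all rewards. -/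
open MeasureTheory

/-!
Write `V(r | γ) = W_γ(r ρ)` with `W_γ(k) = (t - k) F(k) + max(k - γ, 0)`. The function `W_γ` has
increasing differences in `(k, -γ)`, so once `k_μ*` maximizes `W_{γ_μ}`, every voter with
`γ ≤ γ_μ` prefers `k_μ*` to any smaller cutoff and every voter with `γ ≥ γ_μ` prefers it to any
larger one; either group has mass `1/2`. That `k_μ*` maximizes `W_{γ_μ}` comes from splitting the
`max`: `k₀` and `k₁` are the global maximizers of `(t - k) F(k)` and `(t - k) F(k) + k`, because
log-concavity of `f` makes the hazard rate `f / (1 - F)` increase and `f / F` decrease, and `Θ`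
is the cost at which the two branches tie.
-/

open Filter Set Topology

theorem ConcaveOn.add_le_add_of_add_eq {s : Set ℝ} {L : ℝ → ℝ} (hL : ConcaveOn ℝ s L)
    {a b c d : ℝ} (ha : a ∈ s) (hd : d ∈ s) (hab : a ≤ b) (hac : a ≤ c)
    (hsum : a + d = b + c) : L a + L d ≤ L b + L c := by
  rcases (hab.trans (by linarith : b ≤ d)).eq_or_lt with had | had
  · obtain rfl : b = a := by linarith
    obtain rfl : c = b := by linarith
    rw [← had]
  · -- `b` and `c` are the mirror-image convex combinations of `a` and `d`
    set μ := (d - b) / (d - a)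
    have hμ : μ * (d - a) = d - b := div_mul_cancel₀ _ (by linarith)
    have hμ0 : 0 ≤ μ := div_nonneg (by linarith) (by linarith)
    have hμ1 : 0 ≤ 1 - μ := by nlinarith
    have hb := hL.2 ha hd hμ0 hμ1 (by ring)
    have hc := hL.2 ha hd hμ1 hμ0 (by ring)
    simp only [smul_eq_mul] at hb hc
    rw [show μ * a + (1 - μ) * d = b by linear_combination -hμ] at hb
    rw [show (1 - μ) * a + μ * d = c by linear_combination hμ + hsum] at hc
    linarith

theorem monotoneOn_of_hasDerivAt_nonneg {s : Set ℝ} (hs : Convex ℝ s) {g g' : ℝ → ℝ}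
    (hg : ∀ x, HasDerivAt g (g' x) x) (hg' : ∀ x ∈ s, 0 ≤ g' x) : MonotoneOn g s :=
  monotoneOn_of_hasDerivWithinAt_nonneg hs (fun x _ ↦ (hg x).continuousAt.continuousWithinAt)
    (fun x _ ↦ (hg x).hasDerivWithinAt) fun x hx ↦ hg' x (interior_subset hx)

theorem antitoneOn_of_hasDerivAt_nonpos {s : Set ℝ} (hs : Convex ℝ s) {g g' : ℝ → ℝ}
    (hg : ∀ x, HasDerivAt g (g' x) x) (hg' : ∀ x ∈ s, g' x ≤ 0) : AntitoneOn g s :=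
  antitoneOn_of_hasDerivWithinAt_nonpos hs (fun x _ ↦ (hg x).continuousAt.continuousWithinAt)
    (fun x _ ↦ (hg x).hasDerivWithinAt) fun x hx ↦ hg' x (interior_subset hx)

theorem le_of_hasDerivAt_nonneg_of_nonpos {g g' : ℝ → ℝ} {k : ℝ}
    (hg : ∀ x, HasDerivAt g (g' x) x) (hle : ∀ x ≤ k, 0 ≤ g' x) (hge : ∀ x, k ≤ x → g' x ≤ 0)
    (x : ℝ) : g x ≤ g k := by
  rcases le_total x k with hxk | hkx
  · exact monotoneOn_of_hasDerivAt_nonneg (convex_Iic k) hg hle hxk self_mem_Iic hxk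
  · exact antitoneOn_of_hasDerivAt_nonpos (convex_Ici k) hg hge self_mem_Ici hkx hkx

namespace CostDist

variable (D : CostDist)

theorem f_mul_f_le_s9 {a b c d : ℝ} (hab : a ≤ b) (hac : a ≤ c) (hsum : a + d = b + c) :
    D.f a * D.f d ≤ D.f b * D.f c := by
  have h := Real.exp_le_exp.2
    (D.f_logConcave.add_le_add_of_add_eq (mem_univ a) (mem_univ d) hab hac hsum)
  simpa only [Real.exp_add, Real.exp_log (D.f_pos _)] using h

theorem survival_mul_f_le {x y : ℝ} (hxy : x ≤ y) :
    (1 - D.F y) * D.f x ≤ (1 - D.F x) * D.f y := by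
  let w z := (1 - D.F (z + (y - x))) * D.f x - (1 - D.F z) * D.f y
  have hderiv (z : ℝ) : HasDerivAt w (D.f z * D.f y - D.f (z + (y - x)) * D.f x) z := by
    have h1 := (((D.deriv_eq _).comp_add_const z (y - x)).const_sub 1).mul_const (D.f x)
    have h2 := ((D.deriv_eq z).const_sub 1).mul_const (D.f y)
    exact (h1.sub h2).congr_deriv (by ring)
  have hw : MonotoneOn w (Ici x) := monotoneOn_of_hasDerivAt_nonneg (convex_Ici x) hderiv
    fun z hz ↦ by linarith [D.f_mul_f_le_s9 (d := z + (y - x)) (mem_Ici.1 hz) hxy (by ring)]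
  have hlim : Tendsto w atTop (𝓝 ((1 - 1) * D.f x - (1 - 1) * D.f y)) :=
    ((tendsto_const_nhds.sub (D.tendsto_top.comp
      (tendsto_atTop_add_const_right _ (y - x) tendsto_id))).mul_const _).sub
      ((tendsto_const_nhds.sub D.tendsto_top).mul_const _)
  have hwx : w x ≤ (1 - 1) * D.f x - (1 - 1) * D.f y := ge_of_tendsto hlim <|
    (eventually_ge_atTop x).mono fun z hz ↦ hw self_mem_Ici hz hz
  simp only [w, add_sub_cancel] at hwx
  linarith

theorem F_mul_f_le {x y : ℝ} (hxy : x ≤ y) : D.F x * D.f y ≤ D.F y * D.f x := by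
  let u z := D.F z * D.f y - D.F (z + (y - x)) * D.f x
  have hderiv (z : ℝ) : HasDerivAt u (D.f z * D.f y - D.f (z + (y - x)) * D.f x) z :=
    ((D.deriv_eq z).mul_const _).sub (((D.deriv_eq _).comp_add_const z (y - x)).mul_const _)
  have hu : AntitoneOn u (Iic x) := antitoneOn_of_hasDerivAt_nonpos (convex_Iic x) hderiv
    fun z hz ↦ by
      have := D.f_mul_f_le_s9 (b := z + (y - x)) (d := y) (by linarith) (mem_Iic.1 hz) (by ring)
      linarith
  have hlim : Tendsto u atBot (𝓝 (0 * D.f y - 0 * D.f x)) :=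
    (D.tendsto_bot.mul_const _).sub
      ((D.tendsto_bot.comp (tendsto_atBot_add_const_right _ (y - x) tendsto_id)).mul_const _)
  have hux : u x ≤ 0 * D.f y - 0 * D.f x := ge_of_tendsto hlim <|
    (eventually_le_atBot x).mono fun z hz ↦ hu hz self_mem_Iic hz
  simp only [u, add_sub_cancel] at hux
  linarith

theorem integrableOn_Ioi (a : ℝ) : IntegrableOn D.f (Ioi a) :=
  integrableOn_Ioi_deriv_of_nonneg' (fun x _ ↦ D.deriv_eq x) (fun x _ ↦ (D.f_pos x).le)
    D.tendsto_top

theorem integrableOn_Iic (b : ℝ) : IntegrableOn D.f (Iic b) := by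
  refine integrableOn_Iic_of_intervalIntegral_norm_bounded (D.F b + 1) b
    (fun _ ↦ D.f_diff.continuous.integrableOn_Ioc) tendsto_id ?_
  filter_upwards [D.tendsto_bot.eventually (lt_mem_nhds (by norm_num : (-1 : ℝ) < 0))]
    with i hi
  simp_rw [Real.norm_of_nonneg (D.f_pos _).le]
  rw [intervalIntegral.integral_eq_sub_of_hasDerivAt (fun x _ ↦ D.deriv_eq x)
    (D.f_diff.continuous.intervalIntegrable _ _)]
  simp only [id] at hi ⊢
  linarith

theorem integrable : Integrable D.f := by
  rw [← integrableOn_univ, ← Iic_union_Ioi (a := 0)]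
  exact (D.integrableOn_Iic 0).union (D.integrableOn_Ioi 0)

theorem setIntegral_Iic (a : ℝ) : ∫ x in Iic a, D.f x = D.F a := by
  simpa using integral_Iic_of_hasDerivAt_of_tendsto' (fun x _ ↦ D.deriv_eq x)
    (D.integrableOn_Iic a) D.tendsto_bot

theorem setIntegral_Ioi (a : ℝ) : ∫ x in Ioi a, D.f x = 1 - D.F a :=
  integral_Ioi_of_hasDerivAt_of_tendsto' (fun x _ ↦ D.deriv_eq x) (D.integrableOn_Ioi a)
    D.tendsto_top

theorem half_le_setIntegral_of_median {m : ℝ} (hm : D.F m = 1 / 2) {S : Set ℝ}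
    (hS : Iic m ⊆ S ∨ Ioi m ⊆ S) : 1 / 2 ≤ ∫ x in S, D.f x := by
  have hmono {T : Set ℝ} (hT : T ⊆ S) : ∫ x in T, D.f x ≤ ∫ x in S, D.f x :=
    setIntegral_mono_set D.integrable.integrableOn
      (Eventually.of_forall fun x ↦ (D.f_pos x).le) hT.eventuallyLE
  rcases hS with hS | hS
  · calc (1 : ℝ) / 2 = ∫ x in Iic m, D.f x := by rw [D.setIntegral_Iic, hm]
      _ ≤ _ := hmono hS
  · calc (1 : ℝ) / 2 = ∫ x in Ioi m, D.f x := by rw [D.setIntegral_Ioi, hm]; norm_num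
      _ ≤ _ := hmono hS

theorem sub_mul_F_le_of_eq_sub_div {t k₀ : ℝ} (hk₀ : k₀ = t - D.F k₀ / D.f k₀)
    (k : ℝ) : (t - k) * D.F k ≤ (t - k₀) * D.F k₀ := by
  have hfoc : (t - k₀) * D.f k₀ = D.F k₀ :=
    (eq_div_iff (D.f_pos k₀).ne').1 (by linarith)
  refine le_of_hasDerivAt_nonneg_of_nonpos (g' := fun x ↦ (t - x) * D.f x - D.F x)
    (fun x ↦ (((hasDerivAt_id' x).const_sub t).mul (D.deriv_eq x)).congr_deriv (by ring))
    (fun x hx ↦ ?_) (fun x hx ↦ ?_) k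
  · have h := D.F_mul_f_le hx
    rw [← hfoc] at h
    have : D.F x ≤ (t - k₀) * D.f x := le_of_mul_le_mul_right (by linarith) (D.f_pos k₀)
    nlinarith [mul_nonneg (sub_nonneg.2 hx) (D.f_pos x).le]
  · have h := D.F_mul_f_le hx
    rw [← hfoc] at h
    have : (t - k₀) * D.f x ≤ D.F x := le_of_mul_le_mul_right (by linarith) (D.f_pos k₀)
    nlinarith [mul_nonneg (sub_nonneg.2 hx) (D.f_pos x).le]

theorem sub_mul_F_add_le_of_eq_add_div {t k₁ : ℝ} (hk₁ : k₁ = t + (1 - D.F k₁) / D.f k₁)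
    (k : ℝ) : (t - k) * D.F k + k ≤ (t - k₁) * D.F k₁ + k₁ := by
  have hfoc : (k₁ - t) * D.f k₁ = 1 - D.F k₁ :=
    (eq_div_iff (D.f_pos k₁).ne').1 (by linarith)
  refine le_of_hasDerivAt_nonneg_of_nonpos (g' := fun x ↦ (t - x) * D.f x + (1 - D.F x))
    (fun x ↦ ((((hasDerivAt_id' x).const_sub t).mul (D.deriv_eq x)).add
      (hasDerivAt_id' x)).congr_deriv (by ring))
    (fun x hx ↦ ?_) (fun x hx ↦ ?_) k
  · have h := D.survival_mul_f_le hx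
    rw [← hfoc] at h
    have : (k₁ - t) * D.f x ≤ 1 - D.F x := le_of_mul_le_mul_right (by linarith) (D.f_pos k₁)
    nlinarith [mul_nonneg (sub_nonneg.2 hx) (D.f_pos x).le]
  · have h := D.survival_mul_f_le hx
    rw [← hfoc] at h
    have : 1 - D.F x ≤ (k₁ - t) * D.f x := le_of_mul_le_mul_right (by linarith) (D.f_pos k₁)
    nlinarith [mul_nonneg (sub_nonneg.2 hx) (D.f_pos x).le]

def voterPayoff (t γ k : ℝ) : ℝ := (t - k) * D.F k + max (k - γ) 0

theorem V_eq_voterPayoff (phi t γ d1 d0 r : ℝ) :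
    V D phi t γ d1 d0 r = D.voterPayoff t γ (r * rho d1 d0 phi) := by
  rw [V, voterPayoff, ← max_add_add_left]
  congr 1
  · rw [EU1]; ring
  · rw [EU0]; ring

theorem voterPayoff_sub_le_of_le {t γ γ' k k' : ℝ} (hγ : γ ≤ γ') (hk : k ≤ k') :
    D.voterPayoff t γ' k' - D.voterPayoff t γ' k ≤
      D.voterPayoff t γ k' - D.voterPayoff t γ k := by
  simp only [voterPayoff, max_def]
  split_ifs <;> linarith

theorem Iic_subset_or_Ioi_subset_of_forall_le {t m kStar : ℝ}
    (hmax : ∀ k, D.voterPayoff t m k ≤ D.voterPayoff t m kStar) (k : ℝ) :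
    Iic m ⊆ {γ | D.voterPayoff t γ k ≤ D.voterPayoff t γ kStar} ∨
      Ioi m ⊆ {γ | D.voterPayoff t γ k ≤ D.voterPayoff t γ kStar} := by
  rcases le_total k kStar with hk | hk
  · refine .inl fun γ hγ ↦ ?_
    rw [mem_ofPred_eq]
    linarith [hmax k, D.voterPayoff_sub_le_of_le (t := t) (mem_Iic.1 hγ) hk]
  · refine .inr fun γ hγ ↦ ?_
    rw [mem_ofPred_eq]
    linarith [hmax k, D.voterPayoff_sub_le_of_le (t := t) (mem_Ioi.1 hγ).le hk]

theorem voterPayoff_le_of_threshold {t γ k₁ k₀ Θ kStar : ℝ}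
    (hk₁ : k₁ = t + (1 - D.F k₁) / D.f k₁) (hk₀ : k₀ = t - D.F k₀ / D.f k₀)
    (hΘ : Θ = k₀ * D.F k₀ + k₁ * (1 - D.F k₁) + t * (D.F k₁ - D.F k₀))
    (h₁ : γ ≤ Θ → kStar = k₁) (h₀ : Θ < γ → kStar = k₀) (k : ℝ) :
    D.voterPayoff t γ k ≤ D.voterPayoff t γ kStar := by
  have hΘ' : Θ = (t - k₁) * D.F k₁ + k₁ - (t - k₀) * D.F k₀ := by rw [hΘ]; ring
  have hupper :
      D.voterPayoff t γ k ≤ max ((t - k₁) * D.F k₁ + k₁ - γ) ((t - k₀) * D.F k₀) := by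
    rcases le_total (k - γ) 0 with h | h
    · rw [voterPayoff, max_eq_right h, add_zero]
      exact le_max_of_le_right (D.sub_mul_F_le_of_eq_sub_div hk₀ k)
    · rw [voterPayoff, max_eq_left h]
      exact le_max_of_le_left (by linarith [D.sub_mul_F_add_le_of_eq_add_div hk₁ k])
  refine hupper.trans ?_
  rcases le_or_gt γ Θ with hγ | hγ
  · rw [h₁ hγ, voterPayoff]
    have := le_max_left (k₁ - γ) 0
    exact max_le (by linarith) (by linarith)
  · rw [h₀ hγ, voterPayoff]
    have := le_max_right (k₀ - γ) 0
    exact max_le (by linarith) (by linarith)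

end CostDist

theorem prop7_general (D : CostDist) (phi t d1 d0 : ℝ)
    (k1v k0v Theta gammaMu kMu : ℝ)
    (hk1 : k1v = t + (1 - D.F k1v) / D.f k1v)
    (hk0 : k0v = t - D.F k0v / D.f k0v)
    (hTheta : Theta = k0v * D.F k0v + k1v * (1 - D.F k1v) + t * (D.F k1v - D.F k0v))
    (hmed : D.F gammaMu = 1 / 2)
    (hkMu1 : gammaMu ≤ Theta → kMu = k1v)
    (hkMu0 : Theta < gammaMu → kMu = k0v) :
    (rho d1 d0 phi ≠ 0 →
      ∀ r : ℝ,
        (1 : ℝ) / 2 ≤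
          ∫ gamma in {gamma : ℝ |
            V D phi t gamma d1 d0 r ≤ V D phi t gamma d1 d0 (kMu / rho d1 d0 phi)},
            D.f gamma) ∧
    (rho d1 d0 phi = 0 →
      ∀ gamma r r' : ℝ, V D phi t gamma d1 d0 r = V D phi t gamma d1 d0 r') := by
  refine ⟨fun hρ r ↦ ?_, fun hρ γ r r' ↦ ?_⟩
  · simp only [CostDist.V_eq_voterPayoff, div_mul_cancel₀ _ hρ]
    exact D.half_le_setIntegral_of_median hmed <| D.Iic_subset_or_Ioi_subset_of_forall_le
      (D.voterPayoff_le_of_threshold hk1 hk0 hTheta hkMu1 hkMu0) _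
  · simp only [CostDist.V_eq_voterPayoff, hρ, mul_zero]

/-- **Proposition 7 (median voter theorem).** For a non-null classifier, the reward
`r* = k_μ*(t)/ρ(δ,φ)` is weakly preferred to any other reward by a set of voters of
probability at least `1/2`; for a null classifier all voters are indifferent among
all rewards. -/
theorem prop7 (D : CostDist) (phi t d1 d0 : ℝ)
    (hphi : phi ∈ Set.Ioc (1 / 2 : ℝ) 1) (ht : 0 ≤ t)
    (hd1 : d1 ∈ Set.Icc (0 : ℝ) 1) (hd0 : d0 ∈ Set.Icc (0 : ℝ) 1)
    (k1v k0v Theta gammaMu kMu : ℝ)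
    (hk1 : k1v = t + (1 - D.F k1v) / D.f k1v)
    (hk0 : k0v = t - D.F k0v / D.f k0v)
    (hTheta : Theta = k0v * D.F k0v + k1v * (1 - D.F k1v) + t * (D.F k1v - D.F k0v))
    (hmed : D.F gammaMu = 1 / 2)
    (hkMu1 : gammaMu ≤ Theta → kMu = k1v)
    (hkMu0 : Theta < gammaMu → kMu = k0v) :
    (rho d1 d0 phi ≠ 0 →
      ∀ r : ℝ,
        (1 : ℝ) / 2 ≤
          ∫ gamma in {gamma : ℝ |
            V D phi t gamma d1 d0 r ≤ V D phi t gamma d1 d0 (kMu / rho d1 d0 phi)},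
            D.f gamma) ∧
    (rho d1 d0 phi = 0 →
      ∀ gamma r r' : ℝ, V D phi t gamma d1 d0 r = V D phi t gamma d1 d0 r') :=
  prop7_general D phi t d1 d0 k1v k0v Theta gammaMu kMu hk1 hk0 hTheta hmed hkMu1 hkMu0
end
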